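/- Let $T:V\to L$ be a relative Rota-Baxter operator on a Leibniz algebra $(L,[\cdot,\cdot])$ with respect to a representation $(V;\rho^l,\rho^r)$, i.e., $[Tu,Tv]=T(\rho^l(Tu)v+\rho^r(Tv)u)$. Then $T$ is a relative Rota-Baxter operator on the Leibniz triple system $(L,\{x,y,z\}=[[x,y],z])$ with respect to the representation $(R,M,L)$ given by $R(x,y)=\rho^r(y)\rho^r(x)$, $M(x,y)=\rho^r(y)\rho^l(x)$, $L(x,y)=\rho^l([x,y])$. -/

import Mathlib

def IsTrilin (K : Type*) [Field K] {L M : Type*} [AddCommGroup L] [Module K L]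
    [AddCommGroup M] [Module K M] (t : L → L → L → M) : Prop :=
  (∀ y z, IsLinearMap K fun x => t x y z) ∧ (∀ x z, IsLinearMap K fun y => t x y z) ∧
    (∀ x y, IsLinearMap K fun z => t x y z)

def LTSIdent {L : Type*} [AddCommGroup L] (t : L → L → L → L) : Prop :=
  (∀ a b c d e, t a b (t c d e) =
      t (t a b c) d e - t (t a b d) c e - t (t a b e) c d + t (t a b e) d c) ∧
  (∀ a b c d e, t a (t b c d) e =
      t (t a b c) d e - t (t a c b) d e - t (t a d b) c e + t (t a d c) b e)

def IsLTS (K : Type*) [Field K] {L : Type*} [AddCommGroup L] [Module K L]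
    (t : L → L → L → L) : Prop := IsTrilin K t ∧ LTSIdent t

def sd {L V : Type*} [AddCommGroup L] [AddCommGroup V]
    (t : L → L → L → L) (l m r : L → L → V → V) :
    L × V → L × V → L × V → L × V :=
  fun p q s => (t p.1 q.1 s.1, l p.1 q.1 s.2 + m p.1 s.1 q.2 + r q.1 s.1 p.2)

def IsRep (K : Type*) [Field K] {L V : Type*} [AddCommGroup L] [Module K L]
    [AddCommGroup V] [Module K V] (t : L → L → L → L) (l m r : L → L → V → V) : Prop :=
  IsLTS K (sd t l m r)

def IsRRB {K : Type*} [Field K] {L V : Type*} [AddCommGroup L] [Module K L]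
    [AddCommGroup V] [Module K V] (t : L → L → L → L) (l m r : L → L → V → V)
    (T : V →ₗ[K] L) : Prop :=
  ∀ u v w, t (T u) (T v) (T w) =
    T (l (T u) (T v) w + m (T u) (T w) v + r (T v) (T w) u)

def IsRB {K : Type*} [Field K] {L : Type*} [AddCommGroup L] [Module K L]
    (t : L → L → L → L) (R : L →ₗ[K] L) : Prop :=
  ∀ x y z, t (R x) (R y) (R z) =
    R (t (R x) (R y) z + t (R x) y (R z) + t x (R y) (R z))

def IsNij {K : Type*} [Field K] {A : Type*} [AddCommGroup A] [Module K A]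
    (t : A → A → A → A) (N : A →ₗ[K] A) : Prop :=
  ∀ x y z, t (N x) (N y) (N z) =
    N (t (N x) (N y) z) + N (t x (N y) (N z)) + N (t (N x) y (N z))
      - N (N (t (N x) y z)) - N (N (t x (N y) z)) - N (N (t x y (N z)))
      + N (N (N (t x y z)))

def IsLeib {K : Type*} [Field K] {L : Type*} [AddCommGroup L] [Module K L]
    (b : L →ₗ[K] L →ₗ[K] L) : Prop :=
  ∀ x y z, b x (b y z) = b (b x y) z - b (b x z) y

def IsLeibRep {K : Type*} [Field K] {L V : Type*} [AddCommGroup L] [Module K L]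
    [AddCommGroup V] [Module K V] (b : L →ₗ[K] L →ₗ[K] L)
    (ρl ρr : L →ₗ[K] Module.End K V) : Prop :=
  (∀ x y, ρl (b x y) = ρr y * ρl x - ρl x * ρr y) ∧
    (∀ x y, ρl (b x y) = ρl x * ρl y + ρr y * ρl x) ∧
    (∀ x y, ρr (b x y) = ρr y * ρr x - ρr x * ρr y)

theorem stmt16 {K : Type*} [Field K] {L V : Type*} [AddCommGroup L] [Module K L]
    [AddCommGroup V] [Module K V]
    (b : L →ₗ[K] L →ₗ[K] L)
    (ρl ρr : L →ₗ[K] Module.End K V)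
    (T : V →ₗ[K] L) (hT : ∀ u v, b (T u) (T v) = T (ρl (T u) v + ρr (T v) u)) :
    IsRRB (fun x y z => b (b x y) z)
      (fun x y w => ρl (b x y) w)
      (fun x z v => ρr z (ρl x v))
      (fun y z u => ρr z (ρr y u)) T := by
  intro u v w
  set x := ρl (T u) v + ρr (T v) u with hx
  have hTx : T x = b (T u) (T v) := (hT u v).symm
  calc b (b (T u) (T v)) (T w)
      = b (T x) (T w) := by rw [hTx]
    _ = T (ρl (T x) w + ρr (T w) x) := hT x w
    _ = T (ρl (b (T u) (T v)) w + ρr (T w) (ρl (T u) v) + ρr (T w) (ρr (T v) u)) := by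
      rw [hTx, hx, map_add (ρr (T w)), add_assoc]
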